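/- Let n ∈ ℕ, let A be a real symmetric n×n matrix all of whose eigenvalues are less than or equal to −γ for some γ > 0, and let B be a real n×R matrix. Suppose V : ℝ → Matrix(n,n,ℝ) is differentiable and satisfies V'(t) = A · V(t) + V(t) · Aᵀ + B·Bᵀ for all t ≥ 0, and V* satisfies A · V* + V* · Aᵀ + B·Bᵀ = 0. Then for all t ≥ 0, ‖V(t) − V*‖₂ ≤ e^{−2γt} · ‖V(0) − V*‖₂. -/

import Mathlib

open Matrix

/-- The spectral norm (`2`-norm) of a real square matrix: its operator norm as a linear
map between Euclidean (`ℓ²`) spaces. -/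
noncomputable def specNorm {n : ℕ} (M : Matrix (Fin n) (Fin n) ℝ) : ℝ :=
  ‖Matrix.toEuclideanCLM (𝕜 := ℝ) M‖

/-!
The deviation `W = V - V*` solves `W' = A W + W A`, so `e^{-sA} W(s) e^{-sA}` has zero derivative
and `W(t) = e^{tA} W(0) e^{tA}`. Diagonalizing `A` by an orthogonal matrix gives
`‖e^{tA}‖₂ = maxₖ e^{t λₖ} ≤ e^{-γt}`, and submultiplicativity of the spectral norm yields the
factor `e^{-2γt}`.
-/

open NormedSpace
open scoped Matrix.Norms.L2Operator

theorem specNorm_eq_norm {n : ℕ} (M : Matrix (Fin n) (Fin n) ℝ) : specNorm M = ‖M‖ := rfl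

section Sylvester

variable {𝔸 : Type*} [NormedRing 𝔸] [NormedAlgebra ℝ 𝔸] [CompleteSpace 𝔸]

theorem hasDerivAt_exp_neg_smul (A : 𝔸) (s : ℝ) :
    HasDerivAt (fun u : ℝ => exp (-(u • A))) (-(exp (-(s • A)) * A)) s := by
  simpa [Function.comp_def, neg_smul] using
    (hasDerivAt_exp_smul_const A (-s)).scomp s (hasDerivAt_neg s)

theorem hasDerivAt_exp_neg_smul' (A : 𝔸) (s : ℝ) :
    HasDerivAt (fun u : ℝ => exp (-(u • A))) (-(A * exp (-(s • A)))) s := by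
  simpa [Function.comp_def, neg_smul] using
    (hasDerivAt_exp_smul_const' A (-s)).scomp s (hasDerivAt_neg s)

theorem exp_smul_mul_exp_neg_smul (A : 𝔸) (t : ℝ) : exp (t • A) * exp (-(t • A)) = 1 := by
  let : NormedAlgebra ℚ 𝔸 := .restrictScalars ℚ ℝ 𝔸
  rw [← NormedSpace.exp_add_of_commute (Commute.refl _).neg_right, add_neg_cancel, exp_zero]

theorem exp_neg_smul_mul_exp_smul (A : 𝔸) (t : ℝ) : exp (-(t • A)) * exp (t • A) = 1 := by
  let : NormedAlgebra ℚ 𝔸 := .restrictScalars ℚ ℝ 𝔸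
  rw [← NormedSpace.exp_add_of_commute (Commute.refl _).neg_left, neg_add_cancel, exp_zero]

theorem eq_exp_smul_mul_mul_exp_smul_of_hasDerivAt {A B : 𝔸} {W : ℝ → 𝔸}
    (hW : ∀ s, 0 ≤ s → HasDerivAt W (A * W s + W s * B) s) {t : ℝ} (ht : 0 ≤ t) :
    W t = exp (t • A) * W 0 * exp (t • B) := by
  set F : ℝ → 𝔸 := fun s => exp (-(s • A)) * W s * exp (-(s • B))
  have hF : ∀ s, 0 ≤ s → HasDerivAt F 0 s := by
    intro s hs
    refine (((hasDerivAt_exp_neg_smul A s).mul (hW s hs)).mul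
      (hasDerivAt_exp_neg_smul' B s)).congr_deriv ?_
    simp only [Pi.mul_apply]
    noncomm_ring
  have hFt : F t = F 0 := constant_of_has_deriv_right_zero
    (fun x hx => (hF x hx.1).continuousAt.continuousWithinAt)
    (fun x hx => (hF x hx.1).hasDerivWithinAt) t ⟨ht, le_rfl⟩
  calc W t = exp (t • A) * F t * exp (t • B) := by
        simp only [F, mul_assoc, exp_neg_smul_mul_exp_smul, mul_one]
        simp only [← mul_assoc, exp_smul_mul_exp_neg_smul, one_mul]
    _ = exp (t • A) * W 0 * exp (t • B) := by simp [hFt, F]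

end Sylvester

namespace Matrix

variable {m n : Type*} [Fintype m] [Fintype n] [DecidableEq n]

theorem hasDerivAt_of_hasDerivAt_apply {𝕜 : Type*} [RCLike 𝕜] {f : 𝕜 → Matrix m n 𝕜}
    {f' : Matrix m n 𝕜} {t : 𝕜}
    (h : ∀ i j, HasDerivAt (fun s => f s i j) (f' i j) t) : HasDerivAt f f' t := by
  rw [hasDerivAt_iff_tendsto_slope]
  refine tendsto_pi_nhds.2 fun i => tendsto_pi_nhds.2 fun j => ?_
  exact (hasDerivAt_iff_tendsto_slope.1 (h i j)).congr fun s => by simp [slope_def_module]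

theorem IsHermitian.l2_opNorm_exp_smul_le {A : Matrix n n ℝ} (hA : A.IsHermitian) {μ : ℝ}
    (hμ : ∀ k, hA.eigenvalues k ≤ μ) {t : ℝ} (ht : 0 ≤ t) :
    ‖NormedSpace.exp (t • A)‖ ≤ Real.exp (t * μ) := by
  set U := hA.eigenvectorUnitary
  have hsmul : t • A = U * diagonal (t • hA.eigenvalues) * (star U : Matrix n n ℝ) := by
    conv_lhs => rw [hA.spectral_theorem]
    simp [U]
  have hexp : NormedSpace.exp (t • A) =
      U * diagonal (NormedSpace.exp (t • hA.eigenvalues)) * (star U : Matrix n n ℝ) := by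
    rw [hsmul, ← exp_diagonal]
    exact exp_units_conj (Unitary.toUnits U) _
  rw [hexp, CStarRing.norm_mul_mem_unitary _ (Unitary.star_mem U.2), CStarRing.norm_coe_unitary_mul,
    l2_opNorm_diagonal]
  refine pi_norm_le_iff_of_nonneg (Real.exp_nonneg _) |>.2 fun k => ?_
  rw [Pi.coe_exp, ← Real.exp_eq_exp_ℝ, Real.norm_eq_abs, Real.abs_exp, Pi.smul_apply, smul_eq_mul]
  exact Real.exp_le_exp.2 (mul_le_mul_of_nonneg_left (hμ k) ht)

end Matrix

theorem lyapunov_ode_decay_symmetric_general (n R : ℕ) (γ : ℝ)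
    (A : Matrix (Fin n) (Fin n) ℝ) (hA : A.IsHermitian)
    (heig : ∀ k, hA.eigenvalues k ≤ -γ)
    (B : Matrix (Fin n) (Fin R) ℝ)
    (V : ℝ → Matrix (Fin n) (Fin n) ℝ) (Vstar : Matrix (Fin n) (Fin n) ℝ)
    (hV : ∀ t : ℝ, 0 ≤ t → ∀ i j,
      HasDerivAt (fun s : ℝ => V s i j) ((A * V t + V t * Aᵀ + B * Bᵀ) i j) t)
    (hVstar : A * Vstar + Vstar * Aᵀ + B * Bᵀ = 0) :
    ∀ t : ℝ, 0 ≤ t →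
      specNorm (V t - Vstar) ≤ Real.exp (-2 * γ * t) * specNorm (V 0 - Vstar) := by
  intro t ht
  have hAT : Aᵀ = A := (conjTranspose_eq_transpose_of_trivial A).symm.trans hA
  have hW : ∀ s, 0 ≤ s →
      HasDerivAt (V · - Vstar) (A * (V s - Vstar) + (V s - Vstar) * A) s := by
    intro s hs
    have hrhs : A * (V s - Vstar) + (V s - Vstar) * A = A * V s + V s * Aᵀ + B * Bᵀ := by
      rw [← sub_zero (A * V s + V s * Aᵀ + B * Bᵀ), ← hVstar, hAT]
      noncomm_ring
    rw [hrhs]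
    exact hasDerivAt_of_hasDerivAt_apply fun i j => (hV s hs i j).sub_const (Vstar i j)
  have hexp := hA.l2_opNorm_exp_smul_le heig ht
  rw [specNorm_eq_norm, specNorm_eq_norm, eq_exp_smul_mul_mul_exp_smul_of_hasDerivAt hW ht]
  calc ‖exp (t • A) * (V 0 - Vstar) * exp (t • A)‖
      ≤ ‖exp (t • A)‖ * ‖V 0 - Vstar‖ * ‖exp (t • A)‖ := norm_mul₃_le
    _ ≤ Real.exp (t * -γ) * ‖V 0 - Vstar‖ * Real.exp (t * -γ) := by gcongr
    _ = Real.exp (-2 * γ * t) * ‖V 0 - Vstar‖ := by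
        rw [mul_right_comm, ← Real.exp_add]
        ring_nf

/-- If `A` is real symmetric with all eigenvalues `≤ -γ < 0`, `V` solves the
Lyapunov differential equation `V'(t) = A V(t) + V(t) Aᵀ + B Bᵀ` for `t ≥ 0` and `V*` is a
stationary solution, then `‖V(t) - V*‖₂ ≤ e^(-2γt) ‖V(0) - V*‖₂` for all `t ≥ 0`. -/
theorem lyapunov_ode_decay_symmetric (n R : ℕ) (γ : ℝ) (hγ : 0 < γ)
    (A : Matrix (Fin n) (Fin n) ℝ) (hA : A.IsHermitian)
    (heig : ∀ k, hA.eigenvalues k ≤ -γ)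
    (B : Matrix (Fin n) (Fin R) ℝ)
    (V : ℝ → Matrix (Fin n) (Fin n) ℝ) (Vstar : Matrix (Fin n) (Fin n) ℝ)
    (hV : ∀ t : ℝ, 0 ≤ t → ∀ i j,
      HasDerivAt (fun s : ℝ => V s i j) ((A * V t + V t * Aᵀ + B * Bᵀ) i j) t)
    (hVstar : A * Vstar + Vstar * Aᵀ + B * Bᵀ = 0) :
    ∀ t : ℝ, 0 ≤ t →
      specNorm (V t - Vstar) ≤ Real.exp (-2 * γ * t) * specNorm (V 0 - Vstar) :=
  lyapunov_ode_decay_symmetric_general n R γ A hA heig B V Vstar hV hVstar
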